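/- arXiv:2310.15478 — 3 statements merged into one kernel-verified Lean document; each statement's English description precedes it below -/
import Mathlib

section
/- For the discounted value function V_λ(x₀) = sup_{t≥0} ( ∫₀ᵗ λ e^{-λs} h(x_s) ds + e^{-λt} h(x_t) ) along a trajectory s ↦ x_s, the dynamic programming identity holds: V_λ(x₀) = max( sup_{0 ≤ r ≤ t} ( ∫₀ʳ λ e^{-λs} h(x_s) ds + e^{-λr} h(x_r) ), ∫₀ᵗ λ e^{-λs} h(x_s) ds + e^{-λt} V_λ(x_t) ) for every t ≥ 0, where the value at x_t is computed along the shifted trajectory. -/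
/-!
Split the stopping times `Δ ≥ 0` into `Δ ≤ t` and `Δ = t + u`. The payoff of stopping at `t + u`
is the running reward up to `t` plus `e^{-λt}` times the payoff of stopping the shifted trajectory
at `u`, and the increasing affine map `y ↦ a + e^{-λt} y` commutes with suprema. All suprema are
finite because each payoff is a weighted average of values of `h`.
-/

open Real MeasureTheory Set

section SupSplit

variable {α β : Type*} [AddCommGroup α] [LinearOrder α] [IsOrderedAddMonoid α]
  [ConditionallyCompleteLinearOrder β]

theorem ciSup_nonneg_eq_max_ciSup_Icc_ciSup_add {F : α → β}
    (hF : BddAbove (range fun Δ : {Δ : α // 0 ≤ Δ} => F Δ)) {t : α} (ht : 0 ≤ t) :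
    ⨆ Δ : {Δ : α // 0 ≤ Δ}, F Δ =
      max (⨆ r : {r : α // 0 ≤ r ∧ r ≤ t}, F r) (⨆ u : {u : α // 0 ≤ u}, F (t + u)) := by
  have : Nonempty {r : α // 0 ≤ r ∧ r ≤ t} := ⟨⟨0, le_rfl, ht⟩⟩
  have hF_Icc : BddAbove (range fun r : {r : α // 0 ≤ r ∧ r ≤ t} => F r) :=
    hF.mono <| by rintro _ ⟨r, rfl⟩; exact ⟨⟨r, r.2.1⟩, rfl⟩
  have hF_add : BddAbove (range fun u : {u : α // 0 ≤ u} => F (t + u)) :=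
    hF.mono <| by rintro _ ⟨u, rfl⟩; exact ⟨⟨t + u, add_nonneg ht u.2⟩, rfl⟩
  apply le_antisymm
  · refine ciSup_le fun ⟨Δ, hΔ⟩ => ?_
    rcases le_or_gt Δ t with hΔt | htΔ
    · exact le_max_of_le_left (le_ciSup hF_Icc ⟨Δ, hΔ, hΔt⟩)
    · refine le_max_of_le_right (le_ciSup_of_le hF_add ⟨Δ - t, sub_nonneg.2 htΔ.le⟩ ?_)
      rw [add_sub_cancel]
  · exact max_le (ciSup_le fun r => le_ciSup hF ⟨r, r.2.1⟩)
      (ciSup_le fun u => le_ciSup hF ⟨t + u, add_nonneg ht u.2⟩)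

end SupSplit

noncomputable def discountedPayoff (lam : ℝ) (f : ℝ → ℝ) (Δ : ℝ) : ℝ :=
  (∫ s in (0:ℝ)..Δ, lam * exp (-lam * s) * f s) + exp (-lam * Δ) * f Δ

theorem integral_mul_exp_neg_mul (lam Δ : ℝ) :
    ∫ s in (0:ℝ)..Δ, lam * exp (-lam * s) = 1 - exp (-lam * Δ) := by
  have hderiv (s : ℝ) : HasDerivAt (fun u => -exp (-lam * u)) (lam * exp (-lam * s)) s :=
    ((hasDerivAt_id' s).const_mul (-lam)).exp.neg.congr_deriv (by ring)
  rw [intervalIntegral.integral_eq_sub_of_hasDerivAt (fun s _ => hderiv s)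
    (Continuous.intervalIntegrable (by fun_prop) _ _)]
  simp only [mul_zero, exp_zero]
  ring

theorem discountedPayoff_const (lam c Δ : ℝ) : discountedPayoff lam (fun _ => c) Δ = c := by
  rw [discountedPayoff, intervalIntegral.integral_mul_const, integral_mul_exp_neg_mul]
  ring

theorem discountedPayoff_mono {lam Δ : ℝ} (hlam : 0 ≤ lam) (hΔ : 0 ≤ Δ) {f g : ℝ → ℝ}
    (hf : Continuous f) (hg : Continuous g) (hfg : ∀ s, f s ≤ g s) :
    discountedPayoff lam f Δ ≤ discountedPayoff lam g Δ := by
  refine add_le_add (intervalIntegral.integral_mono_on hΔ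
    (Continuous.intervalIntegrable (by fun_prop) _ _)
    (Continuous.intervalIntegrable (by fun_prop) _ _) fun s _ => ?_) ?_
  · exact mul_le_mul_of_nonneg_left (hfg s) (by positivity)
  · exact mul_le_mul_of_nonneg_left (hfg Δ) (exp_pos _).le

theorem bddAbove_range_discountedPayoff {lam : ℝ} (hlam : 0 ≤ lam) {f : ℝ → ℝ}
    (hf : Continuous f) {C : ℝ} (hfC : ∀ s, f s ≤ C) :
    BddAbove (range fun Δ : {Δ : ℝ // 0 ≤ Δ} => discountedPayoff lam f Δ) := by
  refine ⟨C, range_subset_iff.2 fun Δ => ?_⟩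
  calc discountedPayoff lam f Δ ≤ discountedPayoff lam (fun _ => C) Δ :=
        discountedPayoff_mono hlam Δ.2 hf continuous_const hfC
    _ = C := discountedPayoff_const lam C Δ

theorem discountedPayoff_add (lam : ℝ) {f : ℝ → ℝ} (hf : Continuous f) (t u : ℝ) :
    discountedPayoff lam f (t + u) =
      (∫ s in (0:ℝ)..t, lam * exp (-lam * s) * f s) +
        exp (-lam * t) * discountedPayoff lam (fun s => f (t + s)) u := by
  have hshift : ∫ s in t..t + u, lam * exp (-lam * s) * f s =
      exp (-lam * t) * ∫ s in (0:ℝ)..u, lam * exp (-lam * s) * f (t + s) := by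
    rw [← intervalIntegral.integral_const_mul]
    simpa only [add_zero, zero_add, mul_add, exp_add, mul_left_comm, mul_assoc] using
      (intervalIntegral.integral_comp_add_left (fun s => lam * exp (-lam * s) * f s) t
        (a := 0) (b := u)).symm
  rw [discountedPayoff, discountedPayoff, ← intervalIntegral.integral_add_adjacent_intervals
    (Continuous.intervalIntegrable (by fun_prop) 0 t)
    (Continuous.intervalIntegrable (by fun_prop) t _), hshift, mul_add, exp_add]
  ring

theorem ciSup_discountedPayoff_add {lam : ℝ} (hlam : 0 ≤ lam) {f : ℝ → ℝ} (hf : Continuous f)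
    {C : ℝ} (hfC : ∀ s, f s ≤ C) (t : ℝ) :
    ⨆ u : {u : ℝ // 0 ≤ u}, discountedPayoff lam f (t + u) =
      (∫ s in (0:ℝ)..t, lam * exp (-lam * s) * f s) +
        exp (-lam * t) * ⨆ u : {u : ℝ // 0 ≤ u}, discountedPayoff lam (fun s => f (t + s)) u := by
  let e : ℝ ≃o ℝ := (OrderIso.mulLeft₀ _ (exp_pos (-lam * t))).trans
    (OrderIso.addLeft (∫ s in (0:ℝ)..t, lam * exp (-lam * s) * f s))
  simp_rw [discountedPayoff_add lam hf]
  exact (e.map_ciSup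
    (bddAbove_range_discountedPayoff hlam (by fun_prop) fun s => hfC (t + s))).symm

/-- Dynamic programming identity for the discounted value function
`V_λ(x_t) = sup_{Δ ≥ 0} ( ∫₀^Δ λ e^{-λs} h(x_{t+s}) ds + e^{-λΔ} h(x_{t+Δ}) )`
along a trajectory `x`: for every `t ≥ 0`,
`V 0 = max ( sup_{0 ≤ r ≤ t} ( ∫₀ʳ λ e^{-λs} h(x_s) ds + e^{-λr} h(x_r) ),
             ∫₀ᵗ λ e^{-λs} h(x_s) ds + e^{-λt} V t )`. -/
theorem discounted_dynamic_programming
    {X : Type*} [TopologicalSpace X]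
    (x : ℝ → X) (hx : Continuous x)
    (h : X → ℝ) (hh : Continuous h) (hb : ∃ C, ∀ y, |h y| ≤ C)
    (lam : ℝ) (hlam : 0 ≤ lam)
    (V : ℝ → ℝ)
    (hV : ∀ t : ℝ, V t =
      ⨆ Δ : {Δ : ℝ // 0 ≤ Δ},
        ((∫ s in (0:ℝ)..(Δ : ℝ), lam * Real.exp (-lam * s) * h (x (t + s))) +
          Real.exp (-lam * (Δ : ℝ)) * h (x (t + (Δ : ℝ))))) :
    ∀ t : ℝ, 0 ≤ t →
      V 0 = max
        (⨆ r : {r : ℝ // 0 ≤ r ∧ r ≤ t},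
          ((∫ s in (0:ℝ)..(r : ℝ), lam * Real.exp (-lam * s) * h (x s)) +
            Real.exp (-lam * (r : ℝ)) * h (x (r : ℝ))))
        ((∫ s in (0:ℝ)..t, lam * Real.exp (-lam * s) * h (x s)) +
          Real.exp (-lam * t) * V t) := by
  intro t ht
  obtain ⟨C, hC⟩ := hb
  have hf : Continuous fun s => h (x s) := hh.comp hx
  have hfC (s : ℝ) : h (x s) ≤ C := (le_abs_self _).trans (hC _)
  have hV0 : V 0 = ⨆ Δ : {Δ : ℝ // 0 ≤ Δ}, discountedPayoff lam (fun s => h (x s)) Δ := by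
    rw [hV 0]
    simp only [zero_add]
    rfl
  rw [hV0, hV t, ciSup_nonneg_eq_max_ciSup_Icc_ciSup_add
    (bddAbove_range_discountedPayoff hlam hf hfC) ht, ciSup_discountedPayoff_add hlam hf hfC]
  rfl
end

section
/- For the double integrator ṗ = v, v̇ = u with |u| ≤ 1 and safety constraint p ≥ 0: if an initial state satisfies p₀ ≥ 0 and v₀ < 0 and p₀ < v₀²/2, then for every measurable control u with |u(t)| ≤ 1, the trajectory reaches a state with p(t) < 0 at some time t > 0. -/
/-!
Since the acceleration is at most `1`, comparison with full braking gives `v t ≤ v₀ + t` and then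
`p t ≤ p₀ + v₀ t + t² / 2` for `t ≥ 0`. At the braking time `t = -v₀` the right-hand side is
`p₀ - v₀² / 2 < 0`.
-/

open Set

theorem image_le_of_hasDerivAt_le_hasDerivAt {f f' B B' : ℝ → ℝ} {a b : ℝ}
    (hf : ∀ x ∈ Icc a b, HasDerivAt f (f' x) x) (hB : ∀ x ∈ Icc a b, HasDerivAt B (B' x) x)
    (ha : f a ≤ B a) (bound : ∀ x ∈ Ico a b, f' x ≤ B' x) : ∀ ⦃x⦄, x ∈ Icc a b → f x ≤ B x :=
  image_le_of_deriv_right_le_deriv_boundary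
    (fun x hx => (hf x hx).continuousAt.continuousWithinAt)
    (fun x hx => (hf x (Ico_subset_Icc_self hx)).hasDerivWithinAt) ha
    (fun x hx => (hB x hx).continuousAt.continuousWithinAt)
    (fun x hx => (hB x (Ico_subset_Icc_self hx)).hasDerivWithinAt) bound

section DoubleIntegrator

variable {p v u : ℝ → ℝ}

theorem velocity_le_of_control_le_one (hv : ∀ t, 0 ≤ t → HasDerivAt v (u t) t)
    (hu : ∀ t, 0 ≤ t → u t ≤ 1) {t : ℝ} (ht : 0 ≤ t) : v t ≤ v 0 + t := by
  have hbrake : ∀ s, HasDerivAt (fun s => v 0 + s) 1 s := fun s => (hasDerivAt_id s).const_add _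
  exact image_le_of_hasDerivAt_le_hasDerivAt (fun s hs => hv s hs.1) (fun s _ => hbrake s)
    (by simp) (fun s hs => hu s hs.1) ⟨ht, le_rfl⟩

theorem position_le_of_control_le_one (hp : ∀ t, 0 ≤ t → HasDerivAt p (v t) t)
    (hv : ∀ t, 0 ≤ t → HasDerivAt v (u t) t) (hu : ∀ t, 0 ≤ t → u t ≤ 1) {t : ℝ} (ht : 0 ≤ t) :
    p t ≤ p 0 + v 0 * t + t ^ 2 / 2 := by
  have hbrake : ∀ s, HasDerivAt (fun s => p 0 + v 0 * s + s ^ 2 / 2) (v 0 + s) s := by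
    intro s
    exact ((hasDerivAt_id' s).const_mul (v 0) |>.const_add (p 0)).fun_add
      ((hasDerivAt_pow 2 s).div_const 2) |>.congr_deriv (by ring)
  exact image_le_of_hasDerivAt_le_hasDerivAt (fun s hs => hp s hs.1) (fun s _ => hbrake s)
    (by simp) (fun s hs => velocity_le_of_control_le_one hv hu hs.1) ⟨ht, le_rfl⟩

end DoubleIntegrator

theorem double_integrator_inevitably_unsafe_general
    (p₀ v₀ : ℝ) (hv₀ : v₀ < 0) (hunsafe : p₀ < v₀ ^ 2 / 2)
    (u : ℝ → ℝ) (hu : ∀ t : ℝ, |u t| ≤ 1)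
    (p v : ℝ → ℝ)
    (hp0 : p 0 = p₀) (hv0 : v 0 = v₀)
    (hp : ∀ t : ℝ, 0 ≤ t → HasDerivAt p (v t) t)
    (hv : ∀ t : ℝ, 0 ≤ t → HasDerivAt v (u t) t) :
    ∃ t > (0:ℝ), p t < 0 := by
  have hbrake_time : 0 < -v₀ := neg_pos.mpr hv₀
  refine ⟨-v₀, hbrake_time, ?_⟩
  have hbound := position_le_of_control_le_one hp hv (fun t _ => (abs_le.mp (hu t)).2)
    hbrake_time.le
  rw [hp0, hv0] at hbound
  nlinarith

/-- For the double integrator with `|u| ≤ 1`, any initial state with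
`p₀ ≥ 0`, `v₀ < 0` and `p₀ < v₀²/2` is inevitably unsafe: for every measurable
control `u` with `|u t| ≤ 1`, the trajectory reaches `p t < 0` at some `t > 0`. -/
theorem double_integrator_inevitably_unsafe
    (p₀ v₀ : ℝ) (hp₀ : 0 ≤ p₀) (hv₀ : v₀ < 0) (hunsafe : p₀ < v₀ ^ 2 / 2)
    (u : ℝ → ℝ) (hu_meas : Measurable u) (hu : ∀ t : ℝ, |u t| ≤ 1)
    (p v : ℝ → ℝ)
    (hp0 : p 0 = p₀) (hv0 : v 0 = v₀)
    (hp : ∀ t : ℝ, 0 ≤ t → HasDerivAt p (v t) t)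
    (hv : ∀ t : ℝ, 0 ≤ t → HasDerivAt v (u t) t) :
    ∃ t > (0:ℝ), p t < 0 :=
  double_integrator_inevitably_unsafe_general p₀ v₀ hv₀ hunsafe u hu p v hp0 hv0 hp hv
end

section
/- For the double integrator with |u| ≤ 1, the HOCBF candidate B(p,v) = -v - αp with α > 0 is not a valid CBF for the safety constraint p ≥ 0: there exists a state (p,v) with B(p,v) ≤ 0 (i.e., v ≥ -αp) from which no admissible control can keep the trajectory safe, namely any point with v < 0, p ≥ 0, v ≥ -αp, and p < v²/2 (such points exist for every α > 0). -/
/-- For every `α > 0`, the HOCBF candidate `B(p,v) = -v - αp` for the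
double integrator with `|u| ≤ 1` is not a valid CBF: there is a state with
`B(p,v) ≤ 0` (i.e. `v ≥ -αp`), `v < 0`, `p ≥ 0`, yet `p < v²/2`, so it lies
outside the true viable set `{(p,v) : p ≥ 0 ∧ (v ≥ 0 ∨ v ^ 2 / 2 ≤ p)}`. -/
theorem hocbf_candidate_invalid :
    ∀ α : ℝ, 0 < α →
      ∃ p v : ℝ, (-v - α * p ≤ 0) ∧ v < 0 ∧ 0 ≤ p ∧ -α * p ≤ v ∧ p < v ^ 2 / 2 ∧
        ¬ (0 ≤ p ∧ (0 ≤ v ∨ v ^ 2 / 2 ≤ p)) := by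
  intro α hα
  have hα2 : (0:ℝ) < α ^ 2 := by positivity
  refine ⟨4 / α ^ 2, -4 / α, ?_, ?_, ?_, ?_, ?_, ?_⟩
  · have : -(-4 / α) - α * (4 / α ^ 2) = 0 := by field_simp; ring
    linarith
  · exact div_neg_of_neg_of_pos (by norm_num) hα
  · positivity
  · have : -α * (4 / α ^ 2) = -4 / α := by field_simp
    linarith
  · rw [div_lt_div_iff₀ hα2 (by norm_num), div_pow]
    rw [div_mul_eq_mul_div, lt_div_iff₀ hα2]
    nlinarith
  · rintro ⟨_, h | h⟩
    · exact absurd h (not_le.2 (div_neg_of_neg_of_pos (by norm_num) hα))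
    · rw [div_pow, div_div, div_le_div_iff₀ (by positivity) hα2] at h
      nlinarith
end
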